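/- arXiv:1911.06078 — 9 statements merged into one kernel-verified Lean document; each statement's English description precedes it below -/
import Mathlib

section
/- There exist constants c > 0 and C > 0 such that for all real numbers ξ₁, ξ₂, ξ₃, setting ξ = ξ₁ − ξ₂ + ξ₃ and M = max{|ξ|, |ξ₁|, |ξ₂|, |ξ₃|}, one has c · M² · |ξ − ξ₁| · |ξ − ξ₃| ≤ |Φ₄(ξ, ξ₁, ξ₂, ξ₃)| ≤ C · M² · |ξ − ξ₁| · |ξ − ξ₃|. -/
/-!
On the resonance hyperplane `ξ = ξ₁ - ξ₂ + ξ₃` the quartic phase factors as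
`Φ₄ = (ξ - ξ₁)(ξ - ξ₃) Q` with `Q = ξ² + ξ₁² + ξ₂² + ξ₃² + 2(ξ₁ + ξ₃)²`.
The quadratic form `Q` dominates each of the four squares and is at most twelve times the
largest of them, so `M² ≤ Q ≤ 12 M²`.
-/

namespace Phi4

def weight (ξ₁ ξ₂ ξ₃ ξ : ℝ) : ℝ :=
  ξ ^ 2 + ξ₁ ^ 2 + ξ₂ ^ 2 + ξ₃ ^ 2 + 2 * (ξ₁ + ξ₃) ^ 2

variable {ξ₁ ξ₂ ξ₃ ξ : ℝ}

theorem weight_nonneg : 0 ≤ weight ξ₁ ξ₂ ξ₃ ξ := by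
  unfold weight; positivity

theorem abs_phase_eq_mul_weight (h : ξ = ξ₁ - ξ₂ + ξ₃) :
    |ξ ^ 4 - ξ₁ ^ 4 + ξ₂ ^ 4 - ξ₃ ^ 4| = |ξ - ξ₁| * |ξ - ξ₃| * weight ξ₁ ξ₂ ξ₃ ξ := by
  have factor : ξ ^ 4 - ξ₁ ^ 4 + ξ₂ ^ 4 - ξ₃ ^ 4 = (ξ - ξ₁) * (ξ - ξ₃) * weight ξ₁ ξ₂ ξ₃ ξ := by
    subst h; unfold weight; ring
  rw [factor, abs_mul, abs_mul, abs_of_nonneg weight_nonneg]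

theorem sq_max_le_weight (ξ₁ ξ₂ ξ₃ ξ : ℝ) :
    max (max |ξ| |ξ₁|) (max |ξ₂| |ξ₃|) ^ 2 ≤ weight ξ₁ ξ₂ ξ₃ ξ := by
  refine (Real.le_sqrt (by positivity) weight_nonneg).1
    (max_le (max_le ?_ ?_) (max_le ?_ ?_)) <;> refine Real.abs_le_sqrt ?_ <;> unfold weight <;>
    linarith [sq_nonneg ξ, sq_nonneg ξ₁, sq_nonneg ξ₂, sq_nonneg ξ₃, sq_nonneg (ξ₁ + ξ₃)]

theorem weight_le_twelve_mul_sq_max (ξ₁ ξ₂ ξ₃ ξ : ℝ) :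
    weight ξ₁ ξ₂ ξ₃ ξ ≤ 12 * max (max |ξ| |ξ₁|) (max |ξ₂| |ξ₃|) ^ 2 := by
  set M := max (max |ξ| |ξ₁|) (max |ξ₂| |ξ₃|)
  have sq_le {x : ℝ} (hx : |x| ≤ M) : x ^ 2 ≤ M ^ 2 :=
    sq_le_sq.2 (hx.trans (le_abs_self M))
  have h := sq_le (le_max_left _ _ |>.trans (le_max_left _ _))
  have h₁ := sq_le (le_max_right _ _ |>.trans (le_max_left _ _))
  have h₂ := sq_le (le_max_left _ _ |>.trans (le_max_right _ _))
  have h₃ := sq_le (le_max_right _ _ |>.trans (le_max_right _ _))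
  unfold weight
  linarith [sq_nonneg (ξ₁ - ξ₃)]

end Phi4

open Phi4 in
/-- Two-sided bound `|Φ₄| ∼ max{|ξ|,|ξ₁|,|ξ₂|,|ξ₃|}² |ξ−ξ₁| |ξ−ξ₃|` under
`ξ = ξ₁ − ξ₂ + ξ₃`. -/
theorem phi4_comparable :
    ∃ c C : ℝ, 0 < c ∧ 0 < C ∧
      ∀ ξ₁ ξ₂ ξ₃ ξ M : ℝ, ξ = ξ₁ - ξ₂ + ξ₃ →
        M = max (max |ξ| |ξ₁|) (max |ξ₂| |ξ₃|) →
        c * M ^ 2 * |ξ - ξ₁| * |ξ - ξ₃| ≤ |ξ ^ 4 - ξ₁ ^ 4 + ξ₂ ^ 4 - ξ₃ ^ 4| ∧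
        |ξ ^ 4 - ξ₁ ^ 4 + ξ₂ ^ 4 - ξ₃ ^ 4| ≤ C * M ^ 2 * |ξ - ξ₁| * |ξ - ξ₃| := by
  refine ⟨1, 12, one_pos, by norm_num, fun ξ₁ ξ₂ ξ₃ ξ M hξ hM => ?_⟩
  rw [abs_phase_eq_mul_weight hξ]
  have hdiff : 0 ≤ |ξ - ξ₁| * |ξ - ξ₃| := by positivity
  subst hM
  exact ⟨by linarith [mul_le_mul_of_nonneg_left (sq_max_le_weight ξ₁ ξ₂ ξ₃ ξ) hdiff],
    by linarith [mul_le_mul_of_nonneg_left (weight_le_twelve_mul_sq_max ξ₁ ξ₂ ξ₃ ξ) hdiff]⟩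
end

section
/- There exists a constant c > 0 such that for all real numbers ξ₁, ξ₂, ξ₃, setting ξ = ξ₁ − ξ₂ + ξ₃, one has |Φ₄(ξ, ξ₁, ξ₂, ξ₃)| ≥ c · |Φ₂(ξ, ξ₁, ξ₂, ξ₃)|². -/
/-! With `a = ξ₁ - ξ₂` and `b = ξ₃ - ξ₂` the resonance relation gives `Φ₂ = 2ab` and
`Φ₄ = ab (a² + b² + 3(ξ₁ + ξ₃)²)`, so `|Φ₄| ≥ |ab| (a² + b²) ≥ 2 (ab)² = Φ₂² / 2`. -/

lemma phi2_eq_of_resonance {ξ ξ₁ ξ₂ ξ₃ : ℝ} (hξ : ξ = ξ₁ - ξ₂ + ξ₃) :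
    ξ ^ 2 - ξ₁ ^ 2 + ξ₂ ^ 2 - ξ₃ ^ 2 = 2 * ((ξ₁ - ξ₂) * (ξ₃ - ξ₂)) := by
  subst hξ; ring

lemma phi4_eq_of_resonance {ξ ξ₁ ξ₂ ξ₃ : ℝ} (hξ : ξ = ξ₁ - ξ₂ + ξ₃) :
    ξ ^ 4 - ξ₁ ^ 4 + ξ₂ ^ 4 - ξ₃ ^ 4 =
      (ξ₁ - ξ₂) * (ξ₃ - ξ₂) * ((ξ₁ - ξ₂) ^ 2 + (ξ₃ - ξ₂) ^ 2 + 3 * (ξ₁ + ξ₃) ^ 2) := by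
  subst hξ; ring

lemma two_mul_sq_le_abs_mul_mul_add_sq {a b s : ℝ} (hs : 0 ≤ s) :
    2 * (a * b) ^ 2 ≤ |a * b * (a ^ 2 + b ^ 2 + s)| := by
  have hab : 2 * |a * b| ≤ a ^ 2 + b ^ 2 := by
    simpa [abs_mul, sq_abs, mul_assoc] using two_mul_le_add_sq |a| |b|
  rw [abs_mul, abs_of_nonneg (by positivity : 0 ≤ a ^ 2 + b ^ 2 + s), ← sq_abs (a * b)]
  nlinarith [abs_nonneg (a * b)]

/-- `|Φ₄| ≳ |Φ₂|²` under `ξ = ξ₁ − ξ₂ + ξ₃`. -/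
theorem phi4_ge_phi2_sq :
    ∃ c : ℝ, 0 < c ∧
      ∀ ξ₁ ξ₂ ξ₃ ξ : ℝ, ξ = ξ₁ - ξ₂ + ξ₃ →
        c * |ξ ^ 2 - ξ₁ ^ 2 + ξ₂ ^ 2 - ξ₃ ^ 2| ^ 2 ≤ |ξ ^ 4 - ξ₁ ^ 4 + ξ₂ ^ 4 - ξ₃ ^ 4| := by
  refine ⟨1 / 2, by norm_num, fun ξ₁ ξ₂ ξ₃ ξ hξ => ?_⟩
  rw [phi2_eq_of_resonance hξ, phi4_eq_of_resonance hξ, sq_abs]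
  calc 1 / 2 * (2 * ((ξ₁ - ξ₂) * (ξ₃ - ξ₂))) ^ 2 = 2 * ((ξ₁ - ξ₂) * (ξ₃ - ξ₂)) ^ 2 := by ring
    _ ≤ _ := two_mul_sq_le_abs_mul_mul_add_sq (by positivity)
end

section
/- For every integer k ≥ 1 and all real numbers ξ₁, ξ₂, ξ₃, setting ξ = ξ₁ − ξ₂ + ξ₃, one has the factorization Φ_{2k}(ξ, ξ₁, ξ₂, ξ₃) = (ξ₁ − ξ₂)(ξ₃ − ξ₂) · P_k(ξ₁, ξ₂, ξ₃), where P_k is the explicit polynomial given in the context. -/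
open Finset in
/-- The explicit polynomial `P_k` from the factorization of the phase factor `Φ_{2k}`. -/
noncomputable def phasePoly (k : ℕ) (ξ₁ ξ₂ ξ₃ : ℝ) : ℝ :=
  (∑ m ∈ Finset.Icc 1 (2 * k - 2),
      ξ₃ ^ m * ∑ q ∈ Finset.range (2 * k - 2 - m + 1), ξ₁ ^ q * ξ₂ ^ (2 * k - 2 - m - q)) +
    (∑ q ∈ Finset.range (2 * k - 2 + 1), ξ₁ ^ q * ξ₂ ^ (2 * k - 2 - q)) +
    ∑ m ∈ Finset.Icc 1 (2 * k - 1),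
      ξ₁ ^ (2 * k - 1 - m) *
        ∑ p ∈ Finset.range m, (m.choose p : ℝ) * (ξ₁ - ξ₂) ^ (m - p - 1) * ξ₃ ^ p

/-!
Put `ξ = ξ₁ - ξ₂ + ξ₃` and `n = 2k`. Since `ξ - ξ₁ = ξ₃ - ξ₂`, the two telescoping geometric sums
for `ξⁿ - ξ₁ⁿ` and `ξ₃ⁿ - ξ₂ⁿ` give `Φ_{2k} = (ξ₃ - ξ₂) ∑_{m<n} (ξ^m ξ₁^{n-1-m} - ξ₃^m ξ₂^{n-1-m})`.
Each summand splits as `ξ₃^m (ξ₁^{n-1-m} - ξ₂^{n-1-m}) + ξ₁^{n-1-m} (ξ^m - ξ₃^m)`, and both brackets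
are divisible by `ξ₁ - ξ₂`: the first by a geometric sum, the second by the binomial theorem applied
to `ξ^m = ((ξ₁ - ξ₂) + ξ₃)^m`. The quotients add up to `P_k`.
-/

open Finset

theorem sum_range_succ_eq_add_sum_Icc {M : Type*} [AddCommMonoid M] (f : ℕ → M) (n : ℕ) :
    ∑ m ∈ range (n + 1), f m = f 0 + ∑ m ∈ Icc 1 n, f m := by
  rw [range_eq_Ico, sum_eq_sum_Ico_succ_bot n.succ_pos, zero_add,
    Nat.succ_eq_add_one, Ico_add_one_right_eq_Icc]

section CommRing

variable {R : Type*} [CommRing R]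

theorem geom_sum₂_range_succ_mul (x y : R) (N : ℕ) :
    (∑ q ∈ range (N + 1), x ^ q * y ^ (N - q)) * (x - y) = x ^ (N + 1) - y ^ (N + 1) := by
  simpa using geom_sum₂_mul x y (N + 1)

theorem sum_range_choose_mul_pow_mul (a c : R) (m : ℕ) :
    (∑ p ∈ range m, (m.choose p : R) * a ^ (m - p - 1) * c ^ p) * a = (a + c) ^ m - c ^ m := by
  rw [add_comm a c, add_pow, sum_range_succ, Nat.sub_self, pow_zero, Nat.choose_self,
    Nat.cast_one, mul_one, mul_one, add_sub_cancel_right, sum_mul]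
  refine sum_congr rfl fun p hp => ?_
  have hpm : p < m := mem_range.mp hp
  rw [show a ^ (m - p) = a ^ (m - p - 1) * a by rw [← pow_succ]; congr 1; omega]
  ring

theorem sum_pow_mul_geom_sum₂_mul (x y z : R) {n : ℕ} (hn : 2 ≤ n) :
    ((∑ m ∈ Icc 1 (n - 2), z ^ m * ∑ q ∈ range (n - 2 - m + 1), x ^ q * y ^ (n - 2 - m - q)) +
        ∑ q ∈ range (n - 2 + 1), x ^ q * y ^ (n - 2 - q)) * (x - y) =
      ∑ m ∈ range n, z ^ m * (x ^ (n - 1 - m) - y ^ (n - 1 - m)) := by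
  obtain ⟨N, rfl⟩ := Nat.exists_eq_add_of_le' hn
  rw [Nat.add_sub_cancel, show N + 2 - 1 = N + 1 by omega, add_comm]
  have hsplit : (∑ q ∈ range (N + 1), x ^ q * y ^ (N - q)) +
      ∑ m ∈ Icc 1 N, z ^ m * ∑ q ∈ range (N - m + 1), x ^ q * y ^ (N - m - q) =
      ∑ m ∈ range (N + 1), z ^ m * ∑ q ∈ range (N - m + 1), x ^ q * y ^ (N - m - q) := by
    simp [sum_range_succ_eq_add_sum_Icc]
  rw [hsplit, sum_mul, sum_range_succ _ (N + 1), Nat.sub_self, pow_zero, pow_zero,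
    sub_self, mul_zero, add_zero]
  refine sum_congr rfl fun m hm => ?_
  rw [mul_assoc, geom_sum₂_range_succ_mul, show N - m + 1 = N + 1 - m by
    have := mem_range.mp hm; omega]

theorem sum_pow_mul_sum_choose_mul (x a z : R) {n : ℕ} (hn : 1 ≤ n) :
    (∑ m ∈ Icc 1 (n - 1),
        x ^ (n - 1 - m) * ∑ p ∈ range m, (m.choose p : R) * a ^ (m - p - 1) * z ^ p) * a =
      ∑ m ∈ range n, x ^ (n - 1 - m) * ((a + z) ^ m - z ^ m) := by
  obtain ⟨N, rfl⟩ := Nat.exists_eq_add_of_le' hn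
  rw [Nat.add_sub_cancel, sum_range_succ_eq_add_sum_Icc, sum_mul]
  simp only [pow_zero, sub_self, mul_zero, zero_add]
  exact sum_congr rfl fun m _ => by rw [mul_assoc, sum_range_choose_mul_pow_mul]

theorem sub_add_pow_sub_pow_add_pow_sub_pow (x y z : R) (n : ℕ) :
    (x - y + z) ^ n - x ^ n + y ^ n - z ^ n =
      (z - y) * ∑ m ∈ range n, ((x - y + z) ^ m * x ^ (n - 1 - m) - z ^ m * y ^ (n - 1 - m)) := by
  rw [sum_sub_distrib]
  linear_combination (geom_sum₂_mul z y n) - geom_sum₂_mul (x - y + z) x n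

end CommRing

theorem phasePoly_mul_sub (k : ℕ) (hk : 1 ≤ k) (ξ₁ ξ₂ ξ₃ : ℝ) :
    phasePoly k ξ₁ ξ₂ ξ₃ * (ξ₁ - ξ₂) =
      ∑ m ∈ range (2 * k),
        ((ξ₁ - ξ₂ + ξ₃) ^ m * ξ₁ ^ (2 * k - 1 - m) - ξ₃ ^ m * ξ₂ ^ (2 * k - 1 - m)) := by
  rw [phasePoly, add_mul, sum_pow_mul_geom_sum₂_mul _ _ _ (by omega),
    sum_pow_mul_sum_choose_mul _ _ _ (by omega), ← sum_add_distrib]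
  exact sum_congr rfl fun m _ => by ring

/-- Factorization `Φ_{2k}(ξ, ξ₁, ξ₂, ξ₃) = (ξ₁ − ξ₂)(ξ₃ − ξ₂) P_k(ξ₁, ξ₂, ξ₃)` under
`ξ = ξ₁ − ξ₂ + ξ₃`. -/
theorem phi2k_factorization (k : ℕ) (hk : 1 ≤ k) (ξ₁ ξ₂ ξ₃ ξ : ℝ)
    (hξ : ξ = ξ₁ - ξ₂ + ξ₃) :
    ξ ^ (2 * k) - ξ₁ ^ (2 * k) + ξ₂ ^ (2 * k) - ξ₃ ^ (2 * k) =
      (ξ₁ - ξ₂) * (ξ₃ - ξ₂) * phasePoly k ξ₁ ξ₂ ξ₃ := by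
  rw [hξ, sub_add_pow_sub_pow_add_pow_sub_pow, ← phasePoly_mul_sub k hk]
  ring
end

section
/- For every integer k ≥ 2 and all real numbers ξ₁, ξ₂, ξ₃ with (ξ₁, ξ₂, ξ₃) ≠ (0, 0, 0), one has P_k(ξ₁, ξ₂, ξ₃) > 0; that is, P_k is nonnegative on ℝ³ and has only the trivial root. -/
open Finset

section CommRing

variable {R : Type*} [CommRing R]

/-- `hsymm3 n x y z = ∑_{a + b + c = n} x^a y^b z^c`. -/
def hsymm3 (n : ℕ) (x y z : R) : R :=
  ∑ m ∈ range (n + 1), z ^ m * ∑ q ∈ range (n - m + 1), x ^ q * y ^ (n - m - q)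

theorem hsymm3_comm13 (n : ℕ) (x y z : R) : hsymm3 n x y z = hsymm3 n z y x := by
  simp only [hsymm3, mul_sum]
  rw [sum_comm' (t' := range (n + 1)) (s' := fun q => range (n - q + 1)) (by
    intro m q; simp only [mem_range]; omega)]
  refine sum_congr rfl fun q _ => sum_congr rfl fun m _ => ?_
  rw [Nat.sub_right_comm]; ring

theorem sub_mul_hsymm3 (n : ℕ) (x y z : R) :
    (x - y) * hsymm3 n x y z =
      ∑ i ∈ range (n + 2), z ^ i * x ^ (n + 1 - i) -
        ∑ i ∈ range (n + 2), z ^ i * y ^ (n + 1 - i) := by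
  rw [sum_range_succ _ (n + 1), sum_range_succ _ (n + 1), Nat.sub_self, pow_zero, pow_zero,
    add_sub_add_right_eq_sub, ← sum_sub_distrib, hsymm3, mul_sum]
  refine sum_congr rfl fun m hm => ?_
  have hgeom := geom_sum₂_mul x y (n - m + 1)
  rw [Nat.add_sub_cancel] at hgeom
  rw [Nat.sub_add_comm (Nat.le_of_lt_succ (mem_range.1 hm)), mul_left_comm, mul_comm (x - y),
    hgeom, mul_sub]

theorem sum_choose_mul_pow_eq_geom_sum₂ (w t : R) (m : ℕ) :
    ∑ p ∈ range m, (m.choose p : R) * w ^ (m - p - 1) * t ^ p =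
      ∑ q ∈ range m, (w + t) ^ q * t ^ (m - 1 - q) := by
  induction m with
  | zero => simp
  | succ m ih =>
    have hpascal : ∑ p ∈ range (m + 1), ((m + 1).choose p : R) * w ^ (m + 1 - p - 1) * t ^ p =
        (w + t) ^ m + t * ∑ p ∈ range m, (m.choose p : R) * w ^ (m - p - 1) * t ^ p := by
      rw [add_comm w, add_pow, sum_range_succ' _ m, sum_range_succ', mul_sum]
      simp only [Nat.choose_succ_succ, Nat.cast_add, add_mul, sum_add_distrib,
        Nat.choose_zero_right, Nat.add_sub_add_right, Nat.sub_zero, Nat.add_sub_cancel, Nat.sub_sub,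
        pow_zero, Nat.cast_one, mul_one, one_mul]
      have hshift : ∑ p ∈ range m, (m.choose p : R) * w ^ (m - (p + 1)) * t ^ (p + 1) =
          ∑ p ∈ range m, t * ((m.choose p : R) * w ^ (m - (p + 1)) * t ^ p) :=
        sum_congr rfl fun _ _ => by ring
      have hbinom : ∑ p ∈ range m, (m.choose (p + 1) : R) * w ^ (m - (p + 1)) * t ^ (p + 1) =
          ∑ p ∈ range m, t ^ (p + 1) * w ^ (m - (p + 1)) * (m.choose (p + 1) : R) :=
        sum_congr rfl fun _ _ => by ring
      linear_combination hshift + hbinom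
    rw [hpascal, ih, Nat.add_sub_cancel, geom_sum₂_succ_eq]

end CommRing

theorem StrictConvexOn.strictMonoOn_dslope {S : Set ℝ} {f : ℝ → ℝ} {a : ℝ}
    (hf : StrictConvexOn ℝ S f) (ha : a ∈ S) (hfa : DifferentiableAt ℝ f a) :
    StrictMonoOn (dslope f a) S := by
  intro s hs t ht hst
  rcases eq_or_ne s a with rfl | hsa
  · rw [dslope_same, dslope_of_ne _ hst.ne']
    exact hf.deriv_lt_slope hs ht hst hfa
  rcases eq_or_ne t a with rfl | hta
  · rw [dslope_same, dslope_of_ne _ hsa, slope_comm]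
    exact hf.slope_lt_deriv hs ht hst hfa
  rw [dslope_of_ne _ hsa, dslope_of_ne _ hta, slope_def_field, slope_def_field]
  exact hf.secant_strict_mono ha hs ht hsa hta hst

theorem dslope_pow {𝕜 : Type*} [NontriviallyNormedField 𝕜] (N : ℕ) (a b : 𝕜) :
    dslope (· ^ N) a b = ∑ i ∈ range N, a ^ i * b ^ (N - 1 - i) := by
  rw [geom_sum₂_comm]
  rcases eq_or_ne b a with rfl | hba
  · rw [dslope_same, geom_sum₂_self]; simp
  · rw [dslope_of_ne _ hba, slope_def_field, div_eq_iff (sub_ne_zero.2 hba), geom_sum₂_mul]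

theorem hsymm3_pos_of_ne {n : ℕ} (hn : Even n) {x y : ℝ} (z : ℝ) (hxy : x ≠ y) :
    0 < hsymm3 n x y z := by
  have hmono : StrictMono (dslope (· ^ (n + 2)) z) :=
    strictMonoOn_univ.1 <| ((hn.add even_two).strictConvexOn_pow (by omega)).strictMonoOn_dslope
      trivial (differentiableAt_pow _)
  have hdiff : (x - y) * hsymm3 n x y z = dslope (· ^ (n + 2)) z x - dslope (· ^ (n + 2)) z y := by
    rw [sub_mul_hsymm3, dslope_pow, dslope_pow]; rfl
  rcases hxy.lt_or_gt with h | h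
  · exact pos_of_mul_neg_right (hdiff ▸ sub_neg.2 (hmono h)) (sub_neg.2 h).le
  · exact pos_of_mul_pos_right (hdiff ▸ sub_pos.2 (hmono h)) (sub_pos.2 h).le

theorem hsymm3_self_pos {n : ℕ} (hn : Even n) {x : ℝ} (hx : x ≠ 0) : 0 < hsymm3 n x x x := by
  refine sum_pos (fun m hm => ?_) nonempty_range_add_one
  rw [mul_sum]
  refine sum_pos (fun q hq => ?_) nonempty_range_add_one
  rw [mem_range] at hm hq
  rw [← mul_assoc, ← pow_add, ← pow_add, show m + q + (n - m - q) = n by omega]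
  exact hn.pow_pos hx

theorem hsymm3_pos {n : ℕ} (hn : Even n) {x y z : ℝ} (h : (x, y, z) ≠ (0, 0, 0)) :
    0 < hsymm3 n x y z := by
  rcases ne_or_eq x y with hxy | rfl
  · exact hsymm3_pos_of_ne hn z hxy
  rcases ne_or_eq z x with hzx | rfl
  · rw [hsymm3_comm13]
    exact hsymm3_pos_of_ne hn x hzx
  refine hsymm3_self_pos hn fun hz => h ?_
  simp [hz]

theorem phasePoly_eq_hsymm3 {k : ℕ} (hk : 1 ≤ k) (x y z : ℝ) :
    phasePoly k x y z = hsymm3 (2 * k - 2) x y z + hsymm3 (2 * k - 2) (x - y + z) z x := by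
  set n := 2 * k - 2
  have hn : 2 * k - 1 = n + 1 := by omega
  have hfirst : hsymm3 n x y z = (∑ m ∈ Icc 1 n,
      z ^ m * ∑ q ∈ range (n - m + 1), x ^ q * y ^ (n - m - q)) +
        ∑ q ∈ range (n + 1), x ^ q * y ^ (n - q) := by
    rw [hsymm3, sum_range_eq_add_Ico _ (by omega : 0 < n + 1), Ico_add_one_right_eq_Icc, add_comm]
    simp
  have hsecond : hsymm3 n (x - y + z) z x = ∑ m ∈ Icc 1 (n + 1), x ^ (n + 1 - m) *
      ∑ p ∈ range m, (m.choose p : ℝ) * (x - y) ^ (m - p - 1) * z ^ p := by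
    rw [← Ico_add_one_right_eq_Icc, ← sum_Ico_add' _ 0 (n + 1) 1, ← range_eq_Ico,
      ← sum_range_reflect, hsymm3]
    refine sum_congr rfl fun i hi => ?_
    rw [sum_choose_mul_pow_eq_geom_sum₂]
    have hin := mem_range.1 hi
    rw [show n + 1 - 1 - i + 1 = n - i + 1 by omega, show n + 1 - (n - i + 1) = i by omega,
      Nat.add_sub_cancel]
  rw [hfirst, hsecond, phasePoly, hn]

/-- For `k ≥ 2`, `P_k` is positive away from the origin. -/
theorem phasePoly_pos (k : ℕ) (hk : 2 ≤ k) (ξ₁ ξ₂ ξ₃ : ℝ)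
    (h : (ξ₁, ξ₂, ξ₃) ≠ (0, 0, 0)) :
    0 < phasePoly k ξ₁ ξ₂ ξ₃ := by
  have hn : Even (2 * k - 2) := ⟨k - 1, by omega⟩
  have hη : (ξ₁ - ξ₂ + ξ₃, ξ₃, ξ₁) ≠ (0, 0, 0) := by
    contrapose! h
    simp only [Prod.mk.injEq] at h ⊢
    refine ⟨h.2.2, ?_, h.2.1⟩
    linarith [h.1, h.2.1, h.2.2]
  rw [phasePoly_eq_hsymm3 (by omega)]
  exact add_pos (hsymm3_pos hn h) (hsymm3_pos hn hη)
end

section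
/- For every integer k ≥ 2 there exist constants c > 0 and C > 0 such that for all real numbers ξ₁, ξ₂, ξ₃, one has c · max{|ξ₁|, |ξ₂|, |ξ₃|}^{2k−2} ≤ P_k(ξ₁, ξ₂, ξ₃) ≤ C · max{|ξ₁|, |ξ₂|, |ξ₃|}^{2k−2}. -/
/-!
Write `n = 2k - 2`, `h_d(p, q) = ∑_{i ≤ d} p^i q^(d-i)` and `v = ξ₃ - ξ₂`. Multiplying `P_k` by
`ξ₁ - ξ₂` evaluates its geometric and binomial inner sums, and what remains telescopes to
`(ξ₁ - ξ₂) P_k = h_{n+1}(ξ₁ + v, ξ₁) - h_{n+1}(ξ₂ + v, ξ₂)`.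
Now `t ↦ h_{n+1}(t + v, t)` is strictly increasing (a difference quotient of the convex function
`t ↦ t^(n+2)`), so `P_k > 0` off the plane `ξ₁ = ξ₂`; on that plane `P_k = (n + 2) h_n(ξ₃, ξ₂) > 0`
away from the origin since `n` is even. As `P_k` is continuous and homogeneous of degree `n`, its
minimum and maximum on the unit sphere of the sup norm give `c` and `C`.
-/

open Finset

theorem sum_Icc_one_eq_sum_range {M : Type*} [AddCommMonoid M] (N : ℕ) (f : ℕ → M) :
    ∑ m ∈ Icc 1 N, f m = ∑ i ∈ range N, f (i + 1) := by
  rw [← Ico_add_one_right_eq_Icc, sum_Ico_eq_sum_range]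
  simp [add_comm]

theorem sub_mul_sub_pos_of_strictMono {f : ℝ → ℝ} (hf : StrictMono f) {a b : ℝ} (hab : a ≠ b) :
    0 < (f a - f b) * (a - b) := by
  rcases hab.lt_or_gt with h | h
  · exact mul_pos_of_neg_of_neg (sub_neg.2 (hf h)) (sub_neg.2 h)
  · exact mul_pos (sub_pos.2 (hf h)) (sub_pos.2 h)

theorem exists_pos_mul_norm_pow_le_and_le {E : Type*} [NormedAddCommGroup E] [NormedSpace ℝ E]
    [ProperSpace E] [Nontrivial E] {f : E → ℝ} {n : ℕ} (hf : Continuous f)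
    (hhom : ∀ l : ℝ, 0 ≤ l → ∀ p, f (l • p) = l ^ n * f p) (hpos : ∀ p, p ≠ 0 → 0 < f p) :
    ∃ c C : ℝ, 0 < c ∧ 0 < C ∧ ∀ p, c * ‖p‖ ^ n ≤ f p ∧ f p ≤ C * ‖p‖ ^ n := by
  have hS : (Metric.sphere (0 : E) 1).Nonempty := NormedSpace.sphere_nonempty.2 zero_le_one
  have hpos' : ∀ s ∈ Metric.sphere (0 : E) 1, 0 < f s := fun s hs =>
    hpos s (ne_zero_of_mem_unit_sphere ⟨s, hs⟩)
  obtain ⟨s₀, hs₀, hmin⟩ := (isCompact_sphere (0 : E) 1).exists_isMinOn hS hf.continuousOn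
  obtain ⟨s₁, hs₁, hmax⟩ := (isCompact_sphere (0 : E) 1).exists_isMaxOn hS hf.continuousOn
  refine ⟨f s₀, f s₁, hpos' s₀ hs₀, hpos' s₁ hs₁, fun p => ?_⟩
  obtain ⟨s, hs, hps⟩ : ∃ s ∈ Metric.sphere (0 : E) 1, p = ‖p‖ • s := by
    rcases eq_or_ne p 0 with rfl | hp
    · exact ⟨s₀, hs₀, by simp⟩
    · refine ⟨‖p‖⁻¹ • p, by simp [norm_smul, hp], ?_⟩
      rw [smul_smul, mul_inv_cancel₀ (norm_ne_zero_iff.2 hp), one_smul]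
  have hfp : f p = ‖p‖ ^ n * f s := by rw [hps, hhom _ (norm_nonneg p), ← hps]
  have hpn := pow_nonneg (norm_nonneg p) n
  rw [hfp, mul_comm (f s₀), mul_comm (f s₁)]
  exact ⟨mul_le_mul_of_nonneg_left (hmin hs) hpn, mul_le_mul_of_nonneg_left (hmax hs) hpn⟩

noncomputable def geomSum₂ (d : ℕ) (p q : ℝ) : ℝ :=
  ∑ i ∈ range (d + 1), p ^ i * q ^ (d - i)

theorem geomSum₂_mul_sub (d : ℕ) (p q : ℝ) :
    geomSum₂ d p q * (p - q) = p ^ (d + 1) - q ^ (d + 1) := by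
  simpa [geomSum₂] using geom_sum₂_mul p q (d + 1)

theorem geomSum₂_self (d : ℕ) (p : ℝ) : geomSum₂ d p p = (d + 1) * p ^ d := by
  rw [geomSum₂, sum_congr rfl fun i hi => pow_mul_pow_sub p (mem_range_succ_iff.1 hi)]
  simp

theorem geomSum₂_mul_mul (d : ℕ) (l p q : ℝ) :
    geomSum₂ d (l * p) (l * q) = l ^ d * geomSum₂ d p q := by
  rw [geomSum₂, geomSum₂, mul_sum]
  refine sum_congr rfl fun i hi => ?_
  rw [mul_pow, mul_pow, ← pow_mul_pow_sub l (mem_range_succ_iff.1 hi)]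
  ring

theorem geomSum₂_pos {d : ℕ} (hd : Even d) {p q : ℝ} (h : p ≠ 0 ∨ q ≠ 0) :
    0 < geomSum₂ d p q := by
  rcases eq_or_ne p q with rfl | hpq
  · rw [geomSum₂_self]
    exact mul_pos (by positivity) (hd.pow_pos (by simpa using h))
  · have key : 0 < geomSum₂ d p q * (p - q) ^ 2 := by
      rw [sq, ← mul_assoc, geomSum₂_mul_sub]
      exact sub_mul_sub_pos_of_strictMono hd.add_one.strictMono_pow hpq
    exact pos_of_mul_pos_left key (sq_nonneg _)

/-- For `v ≠ 0` this is the difference quotient `((t + v) ^ (d + 1) - t ^ (d + 1)) / v` of an even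
power, whose derivative has the sign of `((t + v) ^ d - t ^ d) * v > 0`. -/
theorem strictMono_geomSum₂_add_left {d : ℕ} (hd : Odd d) (v : ℝ) :
    StrictMono fun t => geomSum₂ d (t + v) t := by
  rcases eq_or_ne v 0 with rfl | hv
  · simp only [add_zero, geomSum₂_self]
    exact hd.strictMono_pow.const_mul (by positivity)
  have hquot : (fun t => geomSum₂ d (t + v) t) = fun t => ((t + v) ^ (d + 1) - t ^ (d + 1)) / v := by
    ext t
    rw [← geomSum₂_mul_sub, add_sub_cancel_left, mul_div_cancel_right₀ _ hv]
  rw [hquot]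
  refine strictMono_of_hasDerivAt_pos (f' := fun t => (d + 1) * ((t + v) ^ d - t ^ d) / v)
    (fun t => ?_) fun t => ?_
  · refine ((((hasDerivAt_id' t).add_const v).fun_pow (d + 1)).fun_sub
      (hasDerivAt_pow (d + 1) t)).div_const v |>.congr_deriv ?_
    push_cast
    ring
  · have h := sub_mul_sub_pos_of_strictMono hd.strictMono_pow (a := t + v) (b := t) (by simpa using hv)
    rw [add_sub_cancel_left] at h
    rw [show (d + 1) * ((t + v) ^ d - t ^ d) / v = (d + 1) * (((t + v) ^ d - t ^ d) * v) / v ^ 2 by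
      field_simp]
    exact div_pos (mul_pos (by positivity) h) (by positivity)

noncomputable def binomSum (m : ℕ) (w z : ℝ) : ℝ :=
  ∑ p ∈ range m, (m.choose p : ℝ) * w ^ (m - p - 1) * z ^ p

theorem binomSum_mul (m : ℕ) (w z : ℝ) : binomSum m w z * w = (w + z) ^ m - z ^ m := by
  rw [binomSum, sum_mul, eq_sub_iff_add_eq, add_comm w, add_pow, sum_range_succ, Nat.choose_self,
    Nat.sub_self, pow_zero, Nat.cast_one, mul_one, mul_one]
  congr 1
  refine sum_congr rfl fun p hp => ?_
  rw [mul_right_comm _ _ (z ^ p), mul_assoc _ (w ^ _), ← pow_succ,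
    Nat.sub_add_cancel (Nat.sub_pos_of_lt (mem_range.1 hp))]
  ring

theorem binomSum_succ_zero_left (m : ℕ) (z : ℝ) : binomSum (m + 1) 0 z = (m + 1) * z ^ m := by
  rw [binomSum, sum_range_succ, sum_eq_zero fun p hp => ?_]
  · simp
  · rw [zero_pow (by have := mem_range.1 hp; omega)]
    simp

theorem binomSum_mul_mul (m : ℕ) (l w z : ℝ) :
    binomSum m (l * w) (l * z) = l ^ (m - 1) * binomSum m w z := by
  rw [binomSum, binomSum, mul_sum]
  refine sum_congr rfl fun p hp => ?_
  have hp : p ≤ m - 1 := by have := mem_range.1 hp; omega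
  rw [mul_pow, mul_pow, ← pow_mul_pow_sub l hp, Nat.sub_right_comm]
  ring

/-- The polynomial `P_k` of degree `n = 2k - 2`, with the sums over `m` merged and reindexed. -/
noncomputable def phaseForm (n : ℕ) (x y z : ℝ) : ℝ :=
  ∑ m ∈ range (n + 1), (z ^ m * geomSum₂ (n - m) x y + x ^ (n - m) * binomSum (m + 1) (x - y) z)

theorem phasePoly_eq_phaseForm {k : ℕ} (hk : 1 ≤ k) (x y z : ℝ) :
    phasePoly k x y z = phaseForm (2 * k - 2) x y z := by
  obtain ⟨n, hn⟩ : ∃ n, 2 * k - 2 = n := ⟨_, rfl⟩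
  have hn' : 2 * k - 1 = n + 1 := by omega
  rw [phasePoly, phaseForm, hn, hn', sum_add_distrib, sum_Icc_one_eq_sum_range,
    sum_Icc_one_eq_sum_range, sum_range_succ' (fun m => z ^ m * geomSum₂ (n - m) x y)]
  simp [geomSum₂, binomSum]

theorem sub_mul_phaseForm (n : ℕ) (x y z : ℝ) :
    (x - y) * phaseForm n x y z = geomSum₂ (n + 1) (x - y + z) x - geomSum₂ (n + 1) z y := by
  set w := x - y + z
  have hterm : ∀ m ∈ range (n + 1),
      (x - y) * (z ^ m * geomSum₂ (n - m) x y + x ^ (n - m) * binomSum (m + 1) (x - y) z)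
        = (z ^ m * x ^ (n + 1 - m) - z ^ (m + 1) * x ^ (n + 1 - (m + 1)))
          + w ^ (m + 1) * x ^ (n + 1 - (m + 1)) - z ^ m * y ^ (n + 1 - m) := by
    intro m hm
    have hm' : n - m + 1 = n + 1 - m := by have := mem_range.1 hm; omega
    have hgeom := geomSum₂_mul_sub (n - m) x y
    rw [hm'] at hgeom
    rw [Nat.add_sub_add_right]
    linear_combination z ^ m * hgeom + x ^ (n - m) * binomSum_mul (m + 1) (x - y) z
  rw [phaseForm, mul_sum, sum_congr rfl hterm, sum_sub_distrib, sum_add_distrib, sum_range_sub',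
    geomSum₂, geomSum₂, sum_range_succ' (fun m => w ^ m * x ^ (n + 1 - m)) (n + 1),
    sum_range_succ (fun m => z ^ m * y ^ (n + 1 - m)) (n + 1)]
  simp only [pow_zero, one_mul, mul_one, Nat.sub_zero, Nat.sub_self]
  ring

theorem phaseForm_self_left (n : ℕ) (y z : ℝ) : phaseForm n y y z = (n + 2) * geomSum₂ n z y := by
  rw [phaseForm, geomSum₂, mul_sum]
  refine sum_congr rfl fun m hm => ?_
  rw [sub_self, geomSum₂_self, binomSum_succ_zero_left,
    Nat.cast_sub (mem_range_succ_iff.1 hm)]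
  ring

theorem phaseForm_mul_mul (n : ℕ) (l x y z : ℝ) :
    phaseForm n (l * x) (l * y) (l * z) = l ^ n * phaseForm n x y z := by
  rw [phaseForm, phaseForm, mul_sum]
  refine sum_congr rfl fun m hm => ?_
  rw [geomSum₂_mul_mul, ← mul_sub, binomSum_mul_mul, Nat.add_sub_cancel, mul_pow, mul_pow,
    ← pow_mul_pow_sub l (mem_range_succ_iff.1 hm)]
  ring

theorem phaseForm_pos {n : ℕ} (hn : Even n) {x y z : ℝ} (h : (x, y, z) ≠ 0) :
    0 < phaseForm n x y z := by
  rcases eq_or_ne x y with rfl | hxy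
  · rw [phaseForm_self_left]
    refine mul_pos (by positivity) (geomSum₂_pos hn ?_)
    by_contra! h'
    simp_all
  · have hmono := sub_mul_sub_pos_of_strictMono
      (strictMono_geomSum₂_add_left hn.add_one (z - y)) hxy
    rw [show x + (z - y) = x - y + z by ring, show y + (z - y) = z by ring,
      ← sub_mul_phaseForm, mul_comm, ← mul_assoc, ← sq] at hmono
    exact pos_of_mul_pos_right hmono (sq_nonneg _)

theorem continuous_phaseForm (n : ℕ) :
    Continuous fun p : ℝ × ℝ × ℝ => phaseForm n p.1 p.2.1 p.2.2 := by
  unfold phaseForm geomSum₂ binomSum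
  fun_prop

/-- For `k ≥ 2`, `P_k(ξ₁, ξ₂, ξ₃) ∼ max{|ξ₁|,|ξ₂|,|ξ₃|}^{2k−2}`. -/
theorem phasePoly_comparable (k : ℕ) (hk : 2 ≤ k) :
    ∃ c C : ℝ, 0 < c ∧ 0 < C ∧
      ∀ ξ₁ ξ₂ ξ₃ : ℝ,
        c * max (max |ξ₁| |ξ₂|) |ξ₃| ^ (2 * k - 2) ≤ phasePoly k ξ₁ ξ₂ ξ₃ ∧
        phasePoly k ξ₁ ξ₂ ξ₃ ≤ C * max (max |ξ₁| |ξ₂|) |ξ₃| ^ (2 * k - 2) := by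
  obtain ⟨c, C, hc, hC, hbound⟩ := exists_pos_mul_norm_pow_le_and_le
    (continuous_phaseForm (2 * k - 2)) (fun l _ p => phaseForm_mul_mul _ l _ _ _)
    (fun p hp => phaseForm_pos ⟨k - 1, by omega⟩ hp)
  refine ⟨c, C, hc, hC, fun ξ₁ ξ₂ ξ₃ => ?_⟩
  have hnorm : ‖(ξ₁, ξ₂, ξ₃)‖ = max (max |ξ₁| |ξ₂|) |ξ₃| := by simp [Prod.norm_def, max_assoc]
  rw [phasePoly_eq_phaseForm (by omega), ← hnorm]
  exact hbound (ξ₁, ξ₂, ξ₃)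
end

section
/- For every integer k ≥ 1 there exists a constant c > 0 such that for all real numbers ξ₁, ξ₂, ξ₃, setting ξ = ξ₁ − ξ₂ + ξ₃, one has |Φ_{2k}(ξ, ξ₁, ξ₂, ξ₃)| ≥ c · |Φ₂(ξ, ξ₁, ξ₂, ξ₃)|^k. -/
/-!
Write `ξ + ξ₂ = ξ₁ + ξ₃ = 2m`, so that `ξ, ξ₂ = m ± a` and `ξ₁, ξ₃ = m ± b`. Then `Φ₂ = 2(a² - b²)`
and `Φ_{2k} = F a - F b` with `F t = (m + t)^{2k} + (m - t)^{2k}`. Binomially, `F` is an even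
polynomial in `t` whose coefficients are nonnegative (even powers of `m` times binomial
coefficients) and whose leading term is `2 t^{2k}`, so `|F a - F b| ≥ 2 |a^{2k} - b^{2k}|`; and
`|x^k - y^k| ≥ |x - y|^k` for `x, y ≥ 0`. This gives `c = 2^{1-k}`, which is sharp (`m = b = 0`).
-/

open Finset

theorem add_pow_add_sub_pow {R : Type*} [CommRing R] (m t : R) (n : ℕ) :
    (m + t) ^ n + (m - t) ^ n =
      ∑ i ∈ range (n + 1), (t ^ i + (-t) ^ i) * m ^ (n - i) * n.choose i := by
  rw [add_comm m t, sub_eq_neg_add, add_pow, add_pow, ← sum_add_distrib]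
  exact sum_congr rfl fun i _ => by ring

section
variable {R : Type*} [CommRing R] [LinearOrder R] [IsStrictOrderedRing R]

theorem Even.pow_le_pow_of_abs_le {n : ℕ} (hn : Even n) {a b : R} (hab : |b| ≤ |a|) :
    b ^ n ≤ a ^ n := by
  simpa only [hn.pow_abs] using pow_le_pow_left₀ (abs_nonneg b) hab n

theorem two_mul_pow_sub_pow_le {n : ℕ} (hn : Even n) (m : R) {a b : R} (hab : |b| ≤ |a|) :
    2 * (a ^ n - b ^ n) ≤ (m + a) ^ n + (m - a) ^ n - ((m + b) ^ n + (m - b) ^ n) := by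
  rw [add_pow_add_sub_pow, add_pow_add_sub_pow, ← sum_sub_distrib]
  have term_nonneg : ∀ i ∈ range (n + 1), 0 ≤ (a ^ i + (-a) ^ i) * m ^ (n - i) * n.choose i -
      (b ^ i + (-b) ^ i) * m ^ (n - i) * n.choose i := by
    intro i hi
    rcases Nat.even_or_odd i with hi_even | hi_odd
    · have hni : Even (n - i) :=
        (Nat.even_sub (Nat.lt_succ_iff.1 (mem_range.1 hi))).2 (iff_of_true hn hi_even)
      rw [← sub_mul, ← sub_mul, hi_even.neg_pow, hi_even.neg_pow]
      have hba := hi_even.pow_le_pow_of_abs_le hab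
      exact mul_nonneg (mul_nonneg (by linarith) (hni.pow_nonneg m)) (Nat.cast_nonneg _)
    · simp [hi_odd.neg_pow]
  calc 2 * (a ^ n - b ^ n)
      = (a ^ n + (-a) ^ n) * m ^ (n - n) * n.choose n -
          (b ^ n + (-b) ^ n) * m ^ (n - n) * n.choose n := by simp [hn.neg_pow]; ring
    _ ≤ _ := single_le_sum term_nonneg (self_mem_range_succ n)

theorem two_mul_abs_pow_sub_pow_le {n : ℕ} (hn : Even n) (m a b : R) :
    2 * |a ^ n - b ^ n| ≤ |(m + a) ^ n + (m - a) ^ n - ((m + b) ^ n + (m - b) ^ n)| := by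
  wlog hab : |b| ≤ |a| generalizing a b
  · rw [abs_sub_comm, abs_sub_comm ((m + a) ^ n + _)]
    exact this b a (le_of_not_ge hab)
  have h := two_mul_pow_sub_pow_le hn m hab
  have h0 : 0 ≤ a ^ n - b ^ n := sub_nonneg.2 (hn.pow_le_pow_of_abs_le hab)
  rw [abs_of_nonneg h0, abs_of_nonneg (by linarith)]
  exact h

theorem abs_sub_pow_le_abs_pow_sub_pow {x y : R} (hx : 0 ≤ x) (hy : 0 ≤ y) {k : ℕ}
    (hk : k ≠ 0) : |x - y| ^ k ≤ |x ^ k - y ^ k| := by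
  wlog hxy : y ≤ x generalizing x y
  · rw [abs_sub_comm, abs_sub_comm (x ^ k)]
    exact this hy hx (le_of_not_ge hxy)
  have h := pow_add_pow_le (sub_nonneg.2 hxy) hy hk
  rw [sub_add_cancel] at h
  rw [abs_of_nonneg (sub_nonneg.2 hxy), abs_of_nonneg (sub_nonneg.2 (pow_le_pow_left₀ hy hxy k))]
  linarith

end

/-- `|Φ_{2k}| ≳ |Φ₂|^k` under `ξ = ξ₁ − ξ₂ + ξ₃`, for each `k ≥ 1`. -/
theorem phi2k_ge_phi2_pow (k : ℕ) (hk : 1 ≤ k) :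
    ∃ c : ℝ, 0 < c ∧
      ∀ ξ₁ ξ₂ ξ₃ ξ : ℝ, ξ = ξ₁ - ξ₂ + ξ₃ →
        c * |ξ ^ 2 - ξ₁ ^ 2 + ξ₂ ^ 2 - ξ₃ ^ 2| ^ k ≤
          |ξ ^ (2 * k) - ξ₁ ^ (2 * k) + ξ₂ ^ (2 * k) - ξ₃ ^ (2 * k)| := by
  refine ⟨2 / 2 ^ k, by positivity, fun ξ₁ ξ₂ ξ₃ ξ hξ => ?_⟩
  obtain ⟨m, a, b, rfl, rfl, rfl, rfl⟩ :
      ∃ m a b : ℝ, ξ₁ = m + b ∧ ξ₂ = m - a ∧ ξ₃ = m - b ∧ ξ = m + a :=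
    ⟨(ξ₁ + ξ₃) / 2, (ξ₁ - 2 * ξ₂ + ξ₃) / 2, (ξ₁ - ξ₃) / 2, by ring, by ring, by ring, by linarith⟩
  have phi2 : (m + a) ^ 2 - (m + b) ^ 2 + (m - a) ^ 2 - (m - b) ^ 2 = 2 * (a ^ 2 - b ^ 2) := by ring
  have phi2k : (m + a) ^ (2 * k) - (m + b) ^ (2 * k) + (m - a) ^ (2 * k) - (m - b) ^ (2 * k) =
      (m + a) ^ (2 * k) + (m - a) ^ (2 * k) - ((m + b) ^ (2 * k) + (m - b) ^ (2 * k)) := by ring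
  rw [phi2, phi2k, abs_mul, mul_pow, abs_two]
  calc 2 / 2 ^ k * (2 ^ k * |a ^ 2 - b ^ 2| ^ k)
      = 2 * |a ^ 2 - b ^ 2| ^ k := by field_simp
    _ ≤ 2 * |(a ^ 2) ^ k - (b ^ 2) ^ k| := by
      gcongr; exact abs_sub_pow_le_abs_pow_sub_pow (sq_nonneg a) (sq_nonneg b) (by omega)
    _ ≤ _ := by
      simpa only [← pow_mul] using two_mul_abs_pow_sub_pow_le (even_two_mul k) m a b
end

section
/- Let k ≥ 1 be an integer and define f : ℝ → ℝ by f(t) = t^{2k} + (1 − t)^{2k}. Then for all real x and y, f(x) = f(y) if and only if x = y or x + y = 1. -/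
/-!
`f` is strictly convex (a sum of even powers of affine functions) and symmetric about `1/2`.
If `f x = f y` with `x < y` and `x + y ≠ 1`, then one of `x`, `y` lies strictly between the
other one and its mirror image, and strict convexity puts its value strictly below theirs.
-/

open Set

section

variable {𝕜 β : Type*} [Field 𝕜] [LinearOrder 𝕜] [IsStrictOrderedRing 𝕜]
  [AddCommMonoid β] [LinearOrder β] [IsOrderedAddMonoid β] [Module 𝕜 β] [PosSMulStrictMono 𝕜 β]
  {s : Set 𝕜} {f : 𝕜 → β}

theorem StrictConvexOn.lt_of_mem_Ioo_of_apply_eq (hf : StrictConvexOn 𝕜 s f) {a b d : 𝕜}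
    (ha : a ∈ s) (hd : d ∈ s) (hb : b ∈ Ioo a d) (had : f a = f d) : f b < f a := by
  have h := hf.lt_on_openSegment ha hd (hb.1.trans hb.2).ne
    (by rwa [openSegment_eq_Ioo (hb.1.trans hb.2)])
  rwa [← had, max_self] at h

theorem StrictConvexOn.apply_eq_apply_iff_of_symmetric {c : 𝕜} (hf : StrictConvexOn 𝕜 univ f)
    (hsymm : ∀ t, f (c - t) = f t) {x y : 𝕜} : f x = f y ↔ x = y ∨ x + y = c := by
  refine ⟨fun hxy => ?_, ?_⟩
  · wlog hlt : x < y generalizing x y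
    · rcases (not_lt.mp hlt).eq_or_lt with rfl | hgt
      · exact .inl rfl
      · simpa [eq_comm, add_comm] using this hxy.symm hgt
    by_contra! hne
    rcases hne.2.lt_or_gt with hsum | hsum
    · have := hf.lt_of_mem_Ioo_of_apply_eq (mem_univ x) (mem_univ (c - x))
        ⟨hlt, by linarith⟩ (hsymm x).symm
      exact this.ne hxy.symm
    · have := hf.lt_of_mem_Ioo_of_apply_eq (mem_univ (c - y)) (mem_univ y)
        ⟨by linarith, hlt⟩ (hsymm y)
      exact this.ne (hxy.trans (hsymm y).symm)
  · rintro (rfl | hsum)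
    · rfl
    · rw [← hsymm y, ← hsum, add_sub_cancel_right]

end

theorem Even.strictConvexOn_pow_add_one_sub_pow {n : ℕ} (hn : Even n) (hn₀ : n ≠ 0) :
    StrictConvexOn ℝ univ fun t : ℝ => t ^ n + (1 - t) ^ n := by
  have hsub : StrictConvexOn ℝ univ fun t : ℝ => (1 - t) ^ n := by
    have hreflect : (fun t : ℝ => (1 - t) ^ n) = fun t => (-1 + t) ^ n := by
      ext t
      rw [← hn.neg_pow]
      ring
    rw [hreflect]
    exact (hn.strictConvexOn_pow hn₀).translate_right (-1)
  exact (hn.strictConvexOn_pow hn₀).add hsub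

/-- For `f(t) = t^{2k} + (1 − t)^{2k}`, one has `f(x) = f(y)` iff `x = y` or `x + y = 1`. -/
theorem f_eq_iff (k : ℕ) (hk : 1 ≤ k) (f : ℝ → ℝ)
    (hf : ∀ t : ℝ, f t = t ^ (2 * k) + (1 - t) ^ (2 * k)) (x y : ℝ) :
    f x = f y ↔ x = y ∨ x + y = 1 := by
  obtain rfl : f = fun t : ℝ => t ^ (2 * k) + (1 - t) ^ (2 * k) := funext hf
  refine (Even.strictConvexOn_pow_add_one_sub_pow (even_two_mul k) (by omega))
    |>.apply_eq_apply_iff_of_symmetric fun t => ?_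
  simp only [sub_sub_cancel, add_comm]
end

section
/- Let M ≥ 1 be an integer and let ε₁, …, ε_M be nonnegative real numbers with Σ_{j=1}^{M} ε_j > 0. Then for all real numbers ξ₁, ξ₂, ξ₃, setting ξ = ξ₁ − ξ₂ + ξ₃, if ξ ≠ ξ₁ and ξ ≠ ξ₃ then Σ_{j=1}^{M} ε_j · Φ_{2j}(ξ, ξ₁, ξ₂, ξ₃) ≠ 0. -/
/-!
Put `ξ₂ = ξ₁ + ξ₃ - ξ`, so that `ξ + ξ₂ = ξ₁ + ξ₃`. For a strictly convex `f`, of two pairs of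
points with the same sum the more spread out one has the larger `f`-sum. If `ξ₁` and `ξ₃` lie on
the same side of `ξ`, then both lie strictly between `ξ` and `ξ₂`; otherwise `ξ` and `ξ₂` lie
strictly between `ξ₁` and `ξ₃`. Hence every `Φ_{2j}` has the sign of `(ξ₁ - ξ) (ξ₃ - ξ) ≠ 0`, and
so does any combination with nonnegative weights that are not all zero.
-/

open Finset

section StrictConvex

variable {𝕜 : Type*} [Field 𝕜] [LinearOrder 𝕜] [IsStrictOrderedRing 𝕜] {s : Set 𝕜} {f : 𝕜 → 𝕜}
  {a b c d : 𝕜}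

theorem StrictConvexOn.map_add_map_lt_of_lt (hf : StrictConvexOn 𝕜 s f) (ha : a ∈ s) (hd : d ∈ s)
    (hsum : a + d = b + c) (hab : a < b) (hac : a < c) : f b + f c < f a + f d := by
  have hbd : b < d := by linarith
  have hcd : c < d := by linarith
  have hstep : 0 < b - a := sub_pos.2 hab
  have hslope : (f b - f a) / (b - a) < (f d - f c) / (b - a) :=
    calc (f b - f a) / (b - a)
        < (f d - f a) / (d - a) := hf.secant_strict_mono_aux2 ha hd hab hbd
      _ < (f d - f c) / (d - c) := hf.secant_strict_mono_aux3 ha hd hac hcd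
      _ = (f d - f c) / (b - a) := by rw [show d - c = b - a by linarith]
  linarith [(div_lt_div_iff_of_pos_right hstep).1 hslope]

theorem StrictConvexOn.map_add_map_lt_of_mul_pos (hf : StrictConvexOn 𝕜 s f) (ha : a ∈ s)
    (hd : d ∈ s) (hsum : a + d = b + c) (hbc : 0 < (b - a) * (c - a)) :
    f b + f c < f a + f d := by
  rcases pos_and_pos_or_neg_and_neg_of_mul_pos hbc with ⟨hb, hc⟩ | ⟨hb, hc⟩
  · exact hf.map_add_map_lt_of_lt ha hd hsum (sub_pos.1 hb) (sub_pos.1 hc)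
  · rw [add_comm (f a)]
    exact hf.map_add_map_lt_of_lt hd ha (by rw [add_comm, hsum]) (by linarith) (by linarith)

end StrictConvex

theorem Finset.sum_mul_pos_of_sum_pos {ι R : Type*} [Ring R] [LinearOrder R]
    [IsStrictOrderedRing R] {s : Finset ι} {w g : ι → R} (hw : ∀ i ∈ s, 0 ≤ w i)
    (hsum : 0 < ∑ i ∈ s, w i) (hg : ∀ i ∈ s, 0 < g i) : 0 < ∑ i ∈ s, w i * g i := by
  obtain ⟨i, hi, hwi⟩ : ∃ i ∈ s, 0 < w i :=
    exists_lt_of_sum_lt (f := fun _ => 0) (by rwa [sum_const_zero])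
  exact sum_pos' (fun j hj => mul_nonneg (hw j hj) (hg j hj).le) ⟨i, hi, mul_pos hwi (hg i hi)⟩

theorem Finset.sum_mul_neg_of_sum_pos {ι R : Type*} [Ring R] [LinearOrder R]
    [IsStrictOrderedRing R] {s : Finset ι} {w g : ι → R} (hw : ∀ i ∈ s, 0 ≤ w i)
    (hsum : 0 < ∑ i ∈ s, w i) (hg : ∀ i ∈ s, g i < 0) : ∑ i ∈ s, w i * g i < 0 := by
  have := sum_mul_pos_of_sum_pos hw hsum (g := -g) fun i hi => neg_pos.2 (hg i hi)
  simpa only [Pi.neg_apply, mul_neg, sum_neg_distrib, neg_pos] using this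

theorem mixed_phase_ne_zero_general (M : ℕ) (ε : ℕ → ℝ)
    (hε : ∀ j ∈ Finset.Icc 1 M, 0 ≤ ε j)
    (hsum : 0 < ∑ j ∈ Finset.Icc 1 M, ε j)
    (ξ₁ ξ₂ ξ₃ ξ : ℝ) (hξ : ξ = ξ₁ - ξ₂ + ξ₃) (h1 : ξ ≠ ξ₁) (h3 : ξ ≠ ξ₃) :
    ∑ j ∈ Finset.Icc 1 M,
        ε j * (ξ ^ (2 * j) - ξ₁ ^ (2 * j) + ξ₂ ^ (2 * j) - ξ₃ ^ (2 * j)) ≠ 0 := by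
  have hconvex (j : ℕ) (hj : j ∈ Icc 1 M) : StrictConvexOn ℝ Set.univ fun x : ℝ => x ^ (2 * j) :=
    (even_two_mul j).strictConvexOn_pow (by simp only [mem_Icc] at hj; omega)
  have hpairs : ξ + ξ₂ = ξ₁ + ξ₃ := by linarith
  rcases (mul_ne_zero (sub_ne_zero.2 h1.symm) (sub_ne_zero.2 h3.symm)).lt_or_gt with hneg | hpos
  · refine (sum_mul_neg_of_sum_pos hε hsum fun j hj => ?_).ne
    have := (hconvex j hj).map_add_map_lt_of_mul_pos (Set.mem_univ ξ₁) (Set.mem_univ ξ₃)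
      hpairs.symm (by rw [show ξ₂ - ξ₁ = ξ₃ - ξ by linarith]; linarith)
    linarith
  · refine (sum_mul_pos_of_sum_pos hε hsum fun j hj => ?_).ne'
    have := (hconvex j hj).map_add_map_lt_of_mul_pos (Set.mem_univ ξ) (Set.mem_univ ξ₂) hpairs hpos
    linarith

/-- Nonvanishing of the mixed phase factor `Σ_{j=1}^{M} ε_j Φ_{2j}` in the nonresonant
regime `ξ ≠ ξ₁`, `ξ ≠ ξ₃`, where `ξ = ξ₁ − ξ₂ + ξ₃`. -/
theorem mixed_phase_ne_zero (M : ℕ) (hM : 1 ≤ M) (ε : ℕ → ℝ)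
    (hε : ∀ j ∈ Finset.Icc 1 M, 0 ≤ ε j)
    (hsum : 0 < ∑ j ∈ Finset.Icc 1 M, ε j)
    (ξ₁ ξ₂ ξ₃ ξ : ℝ) (hξ : ξ = ξ₁ - ξ₂ + ξ₃) (h1 : ξ ≠ ξ₁) (h3 : ξ ≠ ξ₃) :
    ∑ j ∈ Finset.Icc 1 M,
        ε j * (ξ ^ (2 * j) - ξ₁ ^ (2 * j) + ξ₂ ^ (2 * j) - ξ₃ ^ (2 * j)) ≠ 0 :=
  mixed_phase_ne_zero_general M ε hε hsum ξ₁ ξ₂ ξ₃ ξ hξ h1 h3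
end

section
/- For every ε > 0 there exists a constant C > 0 such that for every real N ≥ 1 and every integer n, the set A_N(n) = {(n₁, n₂, n₃) ∈ ℤ³ : n₁ − n₂ + n₃ = n, n₁ ≠ n, n₃ ≠ n, |Φ₄(n, n₁, n₂, n₃)| ≤ N} is finite and its cardinality is at most C · N^{1/2 + ε}. -/
/-!
With `a = n₁ - n` and `b = n₃ - n` (so `n₂ = n + a + b`), the phase factors as
`Φ₄ = a b (3 (n₁ + n₃)² + a² + b²)`, whence `2 (a b)² ≤ |Φ₄|`. A resonant triple is therefore
determined by a pair of nonzero integers with `|a b| ≤ m := ⌊√N⌋`, and up to signs these are the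
lattice points under the hyperbola `x y = m`, of which there are `∑_{a ≤ m} ⌊m / a⌋ ≤ m (1 + log m)`.
Finally `log x ≤ x ^ ε / ε`.
-/

open Finset Real

lemma phase_eq_mul {R : Type*} [CommRing R] {n n₁ n₂ n₃ : R} (h : n₁ - n₂ + n₃ = n) :
    n ^ 4 - n₁ ^ 4 + n₂ ^ 4 - n₃ ^ 4 =
      (n₁ - n) * (n₃ - n) * (3 * (n₁ + n₃) ^ 2 + (n₁ - n) ^ 2 + (n₃ - n) ^ 2) := by
  obtain rfl : n₂ = n₁ + n₃ - n := by rw [← h]; ring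
  ring

lemma two_mul_sq_le_abs_phase {R : Type*} [CommRing R] [LinearOrder R] [IsStrictOrderedRing R]
    {n n₁ n₂ n₃ : R} (h : n₁ - n₂ + n₃ = n) :
    2 * ((n₁ - n) * (n₃ - n)) ^ 2 ≤ |n ^ 4 - n₁ ^ 4 + n₂ ^ 4 - n₃ ^ 4| := by
  have hab : 2 * |(n₁ - n) * (n₃ - n)| ≤ (n₁ - n) ^ 2 + (n₃ - n) ^ 2 := by
    rw [abs_mul, ← sq_abs (n₁ - n), ← sq_abs (n₃ - n)]
    nlinarith [sq_nonneg (|n₁ - n| - |n₃ - n|)]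
  have hq : 0 ≤ 3 * (n₁ + n₃) ^ 2 + (n₁ - n) ^ 2 + (n₃ - n) ^ 2 := by positivity
  rw [phase_eq_mul h, abs_mul, abs_of_nonneg hq, ← sq_abs]
  nlinarith [abs_nonneg ((n₁ - n) * (n₃ - n)), sq_nonneg (n₁ + n₃)]

def hyperbolaPoints (m : ℕ) : Finset (ℕ × ℕ) :=
  {p ∈ Icc 1 m ×ˢ Icc 1 m | p.1 * p.2 ≤ m}

lemma card_hyperbolaPoints (m : ℕ) : #(hyperbolaPoints m) = ∑ a ∈ Icc 1 m, m / a := by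
  rw [hyperbolaPoints, card_filter, sum_product]
  refine sum_congr rfl fun a ha => ?_
  have ha : 1 ≤ a := (mem_Icc.mp ha).1
  rw [← card_filter, ← (by simp : #(Icc 1 (m / a)) = m / a)]
  congr 1
  ext b
  simp only [mem_filter, mem_Icc, Nat.le_div_iff_mul_le ha, mul_comm b]
  constructor
  · rintro ⟨⟨hb, -⟩, hab⟩; exact ⟨hb, hab⟩
  · rintro ⟨hb, hab⟩; exact ⟨⟨hb, le_trans (Nat.le_mul_of_pos_left b ha) hab⟩, hab⟩

def hyperbolaRegion (m : ℕ) : Set (ℤ × ℤ) :=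
  {p | p.1 ≠ 0 ∧ p.2 ≠ 0 ∧ (p.1 * p.2).natAbs ≤ m}

lemma hyperbolaRegion_subset_image (m : ℕ) :
    hyperbolaRegion m ⊆ (fun q : (ℤ × ℤ) × (ℕ × ℕ) => (q.1.1 * q.2.1, q.1.2 * q.2.2)) ''
      ↑(({1, -1} ×ˢ {1, -1}) ×ˢ hyperbolaPoints m) := by
  rintro ⟨a, b⟩ ⟨ha, hb, hab⟩
  refine ⟨((a.sign, b.sign), (a.natAbs, b.natAbs)), ?_, by simp [Int.sign_mul_abs]⟩
  have hsign : ∀ x : ℤ, x ≠ 0 → x.sign ∈ ({1, -1} : Finset ℤ) := fun x hx => by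
    rcases hx.lt_or_gt with h | h
    · simp [Int.sign_eq_neg_one_of_neg h]
    · simp [Int.sign_eq_one_of_pos h]
  have ha' := Int.natAbs_pos.mpr ha
  have hb' := Int.natAbs_pos.mpr hb
  rw [Int.natAbs_mul] at hab
  simp only [hyperbolaPoints, coe_product, Set.mem_prod, mem_coe, hsign a ha, hsign b hb,
    mem_filter, mem_product, mem_Icc]
  refine ⟨⟨trivial, trivial⟩, ⟨⟨ha', ?_⟩, hb', ?_⟩, hab⟩
  · exact le_trans (Nat.le_mul_of_pos_right _ hb') hab
  · exact le_trans (Nat.le_mul_of_pos_left _ ha') hab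

lemma hyperbolaRegion_finite (m : ℕ) : (hyperbolaRegion m).Finite :=
  (Set.Finite.image _ (finite_toSet _)).subset (hyperbolaRegion_subset_image m)

lemma ncard_hyperbolaRegion_le (m : ℕ) :
    (hyperbolaRegion m).ncard ≤ 4 * ∑ a ∈ Icc 1 m, m / a := by
  calc (hyperbolaRegion m).ncard
      ≤ (_ '' ↑(({1, -1} ×ˢ {1, -1}) ×ˢ hyperbolaPoints m)).ncard :=
        Set.ncard_le_ncard (hyperbolaRegion_subset_image m) (Set.toFinite _)
    _ ≤ #(({1, -1} ×ˢ {1, -1}) ×ˢ hyperbolaPoints m) := by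
        rw [← Set.ncard_coe_finset]; exact Set.ncard_image_le (finite_toSet _)
    _ = 4 * ∑ a ∈ Icc 1 m, m / a := by
        rw [card_product, card_hyperbolaPoints]; rfl

lemma sum_div_le_mul_one_add_log (m : ℕ) :
    ((∑ a ∈ Icc 1 m, m / a : ℕ) : ℝ) ≤ m * (1 + log m) := by
  calc ((∑ a ∈ Icc 1 m, m / a : ℕ) : ℝ)
      ≤ ∑ a ∈ Icc 1 m, (m : ℝ) * (a : ℝ)⁻¹ := by
        push_cast
        exact sum_le_sum fun a _ => (Nat.cast_div_le).trans_eq (div_eq_mul_inv _ _)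
    _ = m * harmonic m := by
        simp only [harmonic_eq_sum_Icc, Rat.cast_sum, Rat.cast_inv, Rat.cast_natCast, mul_sum]
    _ ≤ m * (1 + log m) := mul_le_mul_of_nonneg_left (harmonic_le_one_add_log m) m.cast_nonneg

lemma mul_one_add_log_le_rpow {ε N : ℝ} (hε : 0 < ε) (hN : 1 ≤ N) {m : ℕ} (hm : (m : ℝ) ≤ √N) :
    m * (1 + log m) ≤ (1 + 1 / ε) * N ^ (1 / 2 + ε) := by
  have hmN : (m : ℝ) ≤ N := hm.trans ((sqrt_le_left (by linarith)).mpr (by nlinarith))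
  have hlog : 1 + log m ≤ (1 + 1 / ε) * N ^ ε := by
    have := (log_le_rpow_div m.cast_nonneg hε).trans
      (div_le_div_of_nonneg_right (rpow_le_rpow m.cast_nonneg hmN hε.le) hε.le)
    calc 1 + log m ≤ N ^ ε + N ^ ε / ε := add_le_add (one_le_rpow hN hε.le) this
      _ = (1 + 1 / ε) * N ^ ε := by ring
  calc (m : ℝ) * (1 + log m) ≤ √N * ((1 + 1 / ε) * N ^ ε) :=
        mul_le_mul hm hlog (by linarith [log_natCast_nonneg m]) (sqrt_nonneg N)
    _ = (1 + 1 / ε) * N ^ (1 / 2 + ε) := by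
        rw [sqrt_eq_rpow, rpow_add (by linarith)]; ring

lemma mem_hyperbolaRegion_of_abs_phase_le {N : ℝ} {n n₁ n₂ n₃ : ℤ} (h : n₁ - n₂ + n₃ = n)
    (h₁ : n₁ ≠ n) (h₃ : n₃ ≠ n) (hN : (|n ^ 4 - n₁ ^ 4 + n₂ ^ 4 - n₃ ^ 4| : ℝ) ≤ N) :
    (n₁ - n, n₃ - n) ∈ hyperbolaRegion ⌊√N⌋₊ := by
  refine ⟨sub_ne_zero.mpr h₁, sub_ne_zero.mpr h₃, Nat.le_floor ?_⟩
  have hsq : (((n₁ - n) * (n₃ - n) : ℤ) : ℝ) ^ 2 ≤ N := by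
    have := two_mul_sq_le_abs_phase (n := (n : ℝ)) (n₁ := n₁) (n₂ := n₂) (n₃ := n₃)
      (by exact_mod_cast h)
    push_cast
    nlinarith [sq_nonneg (((n₁ : ℝ) - n) * ((n₃ : ℝ) - n))]
  rw [Nat.cast_natAbs, Int.cast_abs]
  exact abs_le_sqrt hsq

/-- Counting estimate: the resonant set
`A_N(n) = {(n₁,n₂,n₃) ∈ ℤ³ : n₁ − n₂ + n₃ = n, n₁ ≠ n ≠ n₃, |Φ₄(n,n₁,n₂,n₃)| ≤ N}`
has cardinality `O(N^{1/2+ε})`. -/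
theorem resonant_set_card (ε : ℝ) (hε : 0 < ε) :
    ∃ C : ℝ, 0 < C ∧
      ∀ (N : ℝ), 1 ≤ N → ∀ n : ℤ,
        ({(n₁, n₂, n₃) : ℤ × ℤ × ℤ |
            n₁ - n₂ + n₃ = n ∧ n₁ ≠ n ∧ n₃ ≠ n ∧
            (|n ^ 4 - n₁ ^ 4 + n₂ ^ 4 - n₃ ^ 4| : ℝ) ≤ N}).Finite ∧
        (({(n₁, n₂, n₃) : ℤ × ℤ × ℤ |
            n₁ - n₂ + n₃ = n ∧ n₁ ≠ n ∧ n₃ ≠ n ∧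
            (|n ^ 4 - n₁ ^ 4 + n₂ ^ 4 - n₃ ^ 4| : ℝ) ≤ N}).ncard : ℝ) ≤
          C * N ^ (1 / 2 + ε) := by
  refine ⟨4 * (1 + 1 / ε), by positivity, fun N hN n => ?_⟩
  set m := ⌊√N⌋₊
  set f := fun p : ℤ × ℤ => (n + p.1, n + p.1 + p.2, n + p.2)
  suffices key : ∀ S : Set (ℤ × ℤ × ℤ), S ⊆ f '' hyperbolaRegion m →
      S.Finite ∧ (S.ncard : ℝ) ≤ 4 * (1 + 1 / ε) * N ^ (1 / 2 + ε) by
    refine key _ fun ⟨n₁, n₂, n₃⟩ ⟨h, h₁, h₃, hN⟩ =>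
      ⟨_, mem_hyperbolaRegion_of_abs_phase_le h h₁ h₃ hN, ?_⟩
    simp only [f, Prod.mk.injEq]
    omega
  intro S hsub
  have himage := (hyperbolaRegion_finite m).image f
  refine ⟨himage.subset hsub, ?_⟩
  calc (S.ncard : ℝ) ≤ (hyperbolaRegion m).ncard := by
        exact_mod_cast (Set.ncard_le_ncard hsub himage).trans
          (Set.ncard_image_le (hyperbolaRegion_finite m))
    _ ≤ 4 * ((∑ a ∈ Icc 1 m, m / a : ℕ) : ℝ) := by
        exact_mod_cast ncard_hyperbolaRegion_le m
    _ ≤ 4 * ((1 + 1 / ε) * N ^ (1 / 2 + ε)) := by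
        gcongr
        exact (sum_div_le_mul_one_add_log m).trans
          (mul_one_add_log_le_rpow hε hN (Nat.floor_le (sqrt_nonneg N)))
    _ = 4 * (1 + 1 / ε) * N ^ (1 / 2 + ε) := by ring
end
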